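/- arXiv:2102.04807 — 4 statements merged into one kernel-verified Lean document; each statement's English description precedes it below -/
import Mathlib

section
/- For a purely imaginary unit quaternion q = b·i + c·j + d·k with b² + c² + d² = 1, the ℝ-linear map x ↦ q⁻¹ · x · j on ℍ has eigenvalues 1 and -1, each with multiplicity two. -/
/-!
Write `T x = q⁻¹ x j`. Since `q` and `j` are unit pure quaternions, `q² = j² = -1`, so `T² = 1`;
and right multiplication by `k`, which anticommutes with `j`, conjugates `T` into `-T`. Hence
`χ_T(X) = χ_{-T}(X)`, while `χ_T(X) χ_{-T}(X) = det(X² - T²) = (X² - 1)⁴`. Thus `χ_T = ±(X² - 1)²`,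
and monicity fixes the sign.
-/

open Quaternion Polynomial

namespace Matrix

variable {R n : Type*} [CommRing R] [Fintype n] [DecidableEq n]

theorem charpoly_mul_charpoly_neg_of_mul_self_eq_one {M : Matrix n n R} (hM : M * M = 1) :
    M.charpoly * (-M).charpoly = (X ^ 2 - 1) ^ Fintype.card n := by
  have hN : C.mapMatrix M * C.mapMatrix M = 1 := by rw [← map_mul, hM, map_one]
  have hX : Commute (scalar n (X : R[X])) (C.mapMatrix M) := scalar_commute _ (Commute.all _) _
  have hprod : M.charmatrix * (-M).charmatrix = scalar n (X ^ 2 - 1 : R[X]) := by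
    simp only [charmatrix, map_neg, sub_neg_eq_add, mul_add, sub_mul, hN, hX.eq, map_sub, map_one,
      sq, map_mul]
    abel
  rw [charpoly, charpoly, ← det_mul, hprod, scalar_apply, det_diagonal, Finset.prod_const,
    Finset.card_univ]

theorem charpoly_eq_of_mul_self_eq_one [IsDomain R] {M : Matrix n n R} (hM : M * M = 1)
    (hneg : (-M).charpoly = M.charpoly) {m : ℕ} (hn : Fintype.card n = 2 * m) :
    M.charpoly = (X ^ 2 - 1) ^ m := by
  have hsq : M.charpoly * M.charpoly = (X ^ 2 - 1) ^ m * (X ^ 2 - 1) ^ m := by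
    rw [← pow_add, ← two_mul, ← hn, ← charpoly_mul_charpoly_neg_of_mul_self_eq_one hM, hneg]
  rcases mul_self_eq_mul_self_iff.mp hsq with h | h
  · exact h
  · -- comparing leading coefficients forces `-1 = 1` in `R`, and then the sign is harmless
    have hmonic : ((X ^ 2 - 1 : R[X]) ^ m).Monic := by
      simpa using (monic_X_pow_sub_C (1 : R) two_ne_zero).pow m
    have hlead := M.charpoly_monic.leadingCoeff
    rw [h, leadingCoeff_neg, hmonic.leadingCoeff] at hlead
    have hneg_one : (-1 : R[X]) = 1 := by rw [← C_1, ← C_neg, hlead]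
    rw [h, ← neg_one_mul, hneg_one, one_mul]

end Matrix

namespace LinearMap

theorem charpoly_eq_of_mul_self_eq_one {R V : Type*} [CommRing R] [IsDomain R]
    [AddCommGroup V] [Module R V] [Module.Free R V] [Module.Finite R V]
    {f : Module.End R V} (hf : f * f = 1) (e : V ≃ₗ[R] V) (he : e.conj f = -f) {m : ℕ}
    (hV : Module.finrank R V = 2 * m) : f.charpoly = (X ^ 2 - 1) ^ m := by
  let b := Module.Free.chooseBasis R V
  rw [← charpoly_toMatrix f b]
  refine Matrix.charpoly_eq_of_mul_self_eq_one ?_ ?_ ?_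
  · rw [← toMatrix_mul, hf, toMatrix_one]
  · rw [← map_neg, charpoly_toMatrix, charpoly_toMatrix, ← he, e.charpoly_conj]
  · rwa [← Module.finrank_eq_card_chooseBasisIndex]

variable {R A : Type*} [CommRing R] [Ring A] [Algebra R A]

theorem mulLeft_comp_mulRight_mul_self {p r : A} (hp : p * p = -1) (hr : r * r = -1) :
    (mulLeft R p ∘ₗ mulRight R r) * (mulLeft R p ∘ₗ mulRight R r) = 1 := by
  ext x
  simp only [Module.End.mul_apply, comp_apply, mulLeft_apply, mulRight_apply, Module.End.one_apply]
  rw [mul_assoc, ← mul_assoc p, hp, mul_assoc x, hr]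
  simp

theorem conj_mulLeft_comp_mulRight (p : A) {r : A} (u : Aˣ) (hu : r * u = -(u * r)) :
    (u.mulRightLinearEquiv R).conj (mulLeft R p ∘ₗ mulRight R r) =
      -(mulLeft R p ∘ₗ mulRight R r) := by
  have hconj : (u⁻¹ : Aˣ) * r * u = -r := by
    rw [mul_assoc, hu, mul_neg, Units.inv_mul_cancel_left]
  ext x
  simp [mul_assoc, hconj]

end LinearMap

theorem Quaternion.mul_self_eq_neg_one {R : Type*} [CommRing R] {a : ℍ[R]} (hre : a.re = 0)
    (ha : normSq a = 1) : a * a = -1 := by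
  have hstar : star a = -a := by ext <;> simp [hre]
  rw [← neg_neg (a * a), ← mul_neg, ← hstar, self_mul_star, ha, coe_one]

/-- For a purely imaginary unit quaternion `q = b·i + c·j + d·k` with `b² + c² + d² = 1`,
the ℝ-linear map `x ↦ q⁻¹ · x · j` on ℍ has characteristic polynomial `(X-1)² (X+1)²`,
i.e. eigenvalues `1` and `-1`, each with multiplicity two. -/
theorem stmt_5 (b c d : ℝ) (h : b ^ 2 + c ^ 2 + d ^ 2 = 1) :
    let q : ℍ[ℝ] := ⟨0, b, c, d⟩
    let j : ℍ[ℝ] := ⟨0, 0, 1, 0⟩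
    let M : Matrix (Fin 4) (Fin 4) ℝ :=
      LinearMap.toMatrix (QuaternionAlgebra.basisOneIJK (-1 : ℝ) 0 (-1))
        (QuaternionAlgebra.basisOneIJK (-1 : ℝ) 0 (-1))
        ((LinearMap.mulLeft ℝ q⁻¹).comp (LinearMap.mulRight ℝ j))
    M.charpoly = (X - 1) ^ 2 * (X + 1) ^ 2 := by
  intro q j M
  have hq : q * q = -1 := mul_self_eq_neg_one rfl (by rw [normSq_def']; simp [q, h])
  have hq_inv : q⁻¹ * q⁻¹ = -1 := by rw [← mul_inv_rev, hq, inv_neg_one]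
  have hj : j * j = -1 := mul_self_eq_neg_one rfl (by rw [normSq_def']; simp [j])
  let k : ℍ[ℝ] := ⟨0, 0, 0, 1⟩
  have hk : k ≠ 0 := ne_of_apply_ne QuaternionAlgebra.imK (by simp [k])
  have hjk : j * k = -(k * j) := by
    ext <;> simp only [re_mul, imI_mul, imJ_mul, imK_mul, re_neg, imI_neg, imJ_neg, imK_neg] <;>
      simp [j, k]
  have hT : (LinearMap.mulLeft ℝ q⁻¹ ∘ₗ LinearMap.mulRight ℝ j).charpoly = (X ^ 2 - 1) ^ 2 :=
    LinearMap.charpoly_eq_of_mul_self_eq_one (LinearMap.mulLeft_comp_mulRight_mul_self hq_inv hj)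
      _ (LinearMap.conj_mulLeft_comp_mulRight _ (Units.mk0 k hk) hjk) finrank_eq_four
  calc M.charpoly = (X ^ 2 - 1) ^ 2 := (LinearMap.charpoly_toMatrix _ _).trans hT
    _ = (X - 1) ^ 2 * (X + 1) ^ 2 := by ring
end

section
/- Let T : Sp(1) × Sp(1) → Sp(1) × Sp(1) be defined by T(u,v) = conjugate of (1,j)⁻¹ · (u,v) · (1,j), i.e., T(u,v) = (ū, conj(j⁻¹ v j)). Then the fixed point set of T is {(ε, x₀ + x₁ i + x₃ k) : ε ∈ {1,-1}, x₀² + x₁² + x₃² = 1}, i.e., T(u,v) = (u,v) if and only if u = ±1 and the j-component of v vanishes. -/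
open Quaternion

namespace Quaternion

section CommRing

variable {R : Type*} [CommRing R]

def j : ℍ[R] := ⟨0, 0, 1, 0⟩

@[simp] theorem re_j : (j : ℍ[R]).re = 0 := rfl
@[simp] theorem imI_j : (j : ℍ[R]).imI = 0 := rfl
@[simp] theorem imJ_j : (j : ℍ[R]).imJ = 1 := rfl
@[simp] theorem imK_j : (j : ℍ[R]).imK = 0 := rfl

theorem j_mul_j : (j : ℍ[R]) * j = -1 := by
  ext <;> simp

theorem star_neg_j_mul_mul_j (v : ℍ[R]) :
    star (-j * v * j) = v - (2 * v.imJ) • j := by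
  ext <;> simp
  ring

end CommRing

section LinearOrderedField

variable {R : Type*} [Field R] [LinearOrder R] [IsStrictOrderedRing R]

theorem j_inv : (j : ℍ[R])⁻¹ = -j :=
  inv_eq_of_mul_eq_one_right <| by rw [mul_neg, j_mul_j, neg_neg]

theorem star_j_inv_mul_mul_j_eq_self_iff (v : ℍ[R]) :
    star (j⁻¹ * v * j) = v ↔ v.imJ = 0 := by
  rw [j_inv, star_neg_j_mul_mul_j, sub_eq_self, smul_eq_zero]
  simp [Quaternion.ext_iff]

end LinearOrderedField

theorem star_eq_self_iff_of_norm_eq_one {u : ℍ} (hu : ‖u‖ = 1) :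
    star u = u ↔ u = 1 ∨ u = -1 := by
  constructor
  · intro hstar
    rw [star_eq_self] at hstar
    rw [hstar, norm_coe, Real.norm_eq_abs] at hu
    rcases abs_eq (zero_le_one' ℝ) |>.mp hu with h | h
    · left; rw [hstar, h, coe_one]
    · right; rw [hstar, h, coe_neg, coe_one]
  · rintro (rfl | rfl) <;> simp

end Quaternion

theorem stmt_6_general (u v : ℍ[ℝ]) (hu : ‖u‖ = 1) :
    let j : ℍ[ℝ] := ⟨0, 0, 1, 0⟩
    (star u = u ∧ star (j⁻¹ * v * j) = v) ↔ ((u = 1 ∨ u = -1) ∧ v.imJ = 0) :=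
  and_congr (star_eq_self_iff_of_norm_eq_one hu) (star_j_inv_mul_mul_j_eq_self_iff v)

/-- Fixed point set of `T(u,v) = (ū, conj(j⁻¹ v j))` on `Sp(1) × Sp(1)`:
`T(u,v) = (u,v)` iff `u = ±1` and the `j`-component of `v` vanishes. -/
theorem stmt_6 (u v : ℍ[ℝ]) (hu : ‖u‖ = 1) (hv : ‖v‖ = 1) :
    let j : ℍ[ℝ] := ⟨0, 0, 1, 0⟩
    (star u = u ∧ star (j⁻¹ * v * j) = v) ↔ ((u = 1 ∨ u = -1) ∧ v.imJ = 0) :=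
  stmt_6_general u v hu
end

section
/- The fixed point set of T(u,v) = (ū, conj(j⁻¹ v j)) on Sp(1) × Sp(1) is disconnected: the two components X₀ = {1} × {v ∈ Sp(1) : v has no j-component} and Y₀ = {-1} × {v ∈ Sp(1) : v has no j-component} are disjoint nonempty closed sets, and there is no continuous path in the fixed point set from a point of X₀ to a point of Y₀. -/
open Quaternion

/-- The quaternion unit `j`. -/
def jq : ℍ[ℝ] := ⟨0, 0, 1, 0⟩

/-- The fixed point set of `T(u,v) = (ū, conj(j⁻¹ v j))` on `Sp(1) × Sp(1)`. -/
noncomputable def fixedSet : Set (ℍ[ℝ] × ℍ[ℝ]) :=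
  {p | ‖p.1‖ = 1 ∧ ‖p.2‖ = 1 ∧ star p.1 = p.1 ∧ star (jq⁻¹ * p.2 * jq) = p.2}

/-- `X₀`: fixed points with first component `1`. -/
noncomputable def X₀ : Set (ℍ[ℝ] × ℍ[ℝ]) := {p ∈ fixedSet | p.1 = 1}

/-- `Y₀`: fixed points with first component `-1`. -/
noncomputable def Y₀ : Set (ℍ[ℝ] × ℍ[ℝ]) := {p ∈ fixedSet | p.1 = -1}

/-- A self-adjoint unit quaternion is `±1`. -/
lemma pm_one (q : ℍ[ℝ]) (hn : ‖q‖ = 1) (hs : star q = q) : q = 1 ∨ q = -1 := by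
  have h1 : q.imI = 0 := by
    have := congrArg QuaternionAlgebra.imI hs; simp at this; linarith
  have h2 : q.imJ = 0 := by
    have := congrArg QuaternionAlgebra.imJ hs; simp at this; linarith
  have h3 : q.imK = 0 := by
    have := congrArg QuaternionAlgebra.imK hs; simp at this; linarith
  have hq : q = ((q.re : ℝ) : ℍ[ℝ]) := by ext <;> simp [h1, h2, h3]
  rw [hq] at hn ⊢
  rw [Quaternion.norm_coe] at hn
  rcases abs_eq (by norm_num : (0:ℝ) ≤ 1) |>.mp hn with h | h
  · left; rw [h]; norm_num
  · right; rw [h]; push_cast; ring_nf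

lemma jq_ne : jq ≠ 0 := by
  intro h
  have := congrArg QuaternionAlgebra.imJ h
  simp [jq] at this

lemma in_fx : (1, 1) ∈ fixedSet ∧ (-1, 1) ∈ fixedSet := by
  have h : star (jq⁻¹ * 1 * jq) = (1 : ℍ[ℝ]) := by
    rw [mul_one, inv_mul_cancel₀ jq_ne, star_one]
  constructor <;> exact ⟨by simp, by simp, by simp, h⟩

lemma fixed_closed : IsClosed fixedSet := by
  have h1 : IsClosed {p : ℍ[ℝ] × ℍ[ℝ] | ‖p.1‖ = 1} :=
    isClosed_eq (continuous_fst.norm) continuous_const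
  have h2 : IsClosed {p : ℍ[ℝ] × ℍ[ℝ] | ‖p.2‖ = 1} :=
    isClosed_eq (continuous_snd.norm) continuous_const
  have h3 : IsClosed {p : ℍ[ℝ] × ℍ[ℝ] | star p.1 = p.1} :=
    isClosed_eq (continuous_star.comp continuous_fst) continuous_fst
  have h4 : IsClosed {p : ℍ[ℝ] × ℍ[ℝ] | star (jq⁻¹ * p.2 * jq) = p.2} :=
    isClosed_eq (by fun_prop) continuous_snd
  exact h1.inter (h2.inter (h3.inter h4))

/-- The fixed point set is disconnected: `X₀` and `Y₀` are disjoint nonempty closed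
sets, and no continuous path inside the fixed point set joins a point of `X₀` to a
point of `Y₀`. -/
theorem stmt_8 :
    X₀.Nonempty ∧ Y₀.Nonempty ∧ Disjoint X₀ Y₀ ∧ IsClosed X₀ ∧ IsClosed Y₀ ∧
      ¬∃ γ : C(Set.Icc (0 : ℝ) 1, ℍ[ℝ] × ℍ[ℝ]),
        (∀ t, γ t ∈ fixedSet) ∧ γ ⟨0, by norm_num⟩ ∈ X₀ ∧ γ ⟨1, by norm_num⟩ ∈ Y₀ := by
  obtain ⟨hx, hy⟩ := in_fx
  refine ⟨⟨(1,1), hx, rfl⟩, ⟨(-1,1), hy, rfl⟩, ?_, ?_, ?_, ?_⟩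
  · rw [Set.disjoint_left]
    rintro ⟨a, b⟩ ⟨_, h1⟩ ⟨_, h2⟩
    simp only at h1 h2
    rw [h1] at h2
    have := congrArg QuaternionAlgebra.re h2
    norm_num at this
  · exact fixed_closed.inter (isClosed_eq continuous_fst continuous_const)
  · exact fixed_closed.inter (isClosed_eq continuous_fst continuous_const)
  · rintro ⟨γ, hγ, h0, h1⟩
    set f : Set.Icc (0:ℝ) 1 → ℝ := fun t => ((γ t).1).re with hf
    have hfc : Continuous f := by
      exact (continuous_re.comp (continuous_fst.comp γ.continuous))
    have hval : ∀ t, f t = 1 ∨ f t = -1 := by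
      intro t
      rcases pm_one (γ t).1 (hγ t).1 (hγ t).2.2.1 with h | h
      · left; simp [hf, h]
      · right; simp [hf, h]
    have hf0 : f ⟨0, by norm_num⟩ = 1 := by simp only [hf]; rw [h0.2]; simp
    have hf1 : f ⟨1, by norm_num⟩ = -1 := by simp only [hf]; rw [h1.2]; simp
    have : (0:ℝ) ∈ Set.Icc (f ⟨1, by norm_num⟩) (f ⟨0, by norm_num⟩) := by
      rw [hf0, hf1]; norm_num
    obtain ⟨t, ht⟩ := intermediate_value_univ (⟨1, by norm_num⟩ : Set.Icc (0:ℝ) 1)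
      ⟨0, by norm_num⟩ hfc this
    rcases hval t with h | h <;> rw [ht] at h <;> norm_num at h
end

section
/- Let q be a real orthogonal 4×4 matrix, θ ∈ (-π/2, π/2], and let u_α = (1/√(2+2 sin θ)) · (cos θ · q v_α, -(1+sin θ) v_α) ∈ ℝ⁸ for α = 1,…,4, where v_α is the standard basis of ℝ⁴. Then the vectors u_α are orthonormal and each is an eigenvector of H = cos θ·[[0,q],[qᵀ,0]] + sin θ·[[I₄,0],[0,-I₄]] with eigenvalue -1. -/
open Matrix Real

/-- The 8×8 Hamiltonian `H = cos θ·[[0,q],[qᵀ,0]] + sin θ·[[I₄,0],[0,-I₄]]`. -/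
noncomputable def Ham (θ : ℝ) (q : Matrix (Fin 4) (Fin 4) ℝ) :
    Matrix (Fin 4 ⊕ Fin 4) (Fin 4 ⊕ Fin 4) ℝ :=
  Real.cos θ • Matrix.fromBlocks 0 q qᵀ 0 +
    Real.sin θ • Matrix.fromBlocks 1 0 0 (-1)

/-- The occupied-band wave functions
`u_α = (1/√(2+2 sin θ)) · (cos θ · q v_α, -(1+sin θ) v_α)`. -/
noncomputable def uVec (θ : ℝ) (q : Matrix (Fin 4) (Fin 4) ℝ) (α : Fin 4) :
    Fin 4 ⊕ Fin 4 → ℝ :=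
  Sum.elim (fun i => Real.cos θ * q.mulVec (Pi.single α (1 : ℝ)) i / Real.sqrt (2 + 2 * Real.sin θ))
    (fun i => -(1 + Real.sin θ) * (Pi.single α (1 : ℝ) : Fin 4 → ℝ) i / Real.sqrt (2 + 2 * Real.sin θ))

/-
The vector `w = (c • q x, -(1 + s) • x)` is an eigenvector of
`c • [[0, q], [qᵀ, 0]] + s • [[1, 0], [0, -1]]` with eigenvalue `-1` as soon as `qᵀ q = 1` and
`c² + s² = 1`: the upper block is `c (s - (1 + s)) q x`, the lower one `(c² + s + s²) x`.
Since `q` is an isometry, `w ⬝ᵥ w' = (c² + (1 + s)²) x ⬝ᵥ x' = (2 + 2 s) x ⬝ᵥ x'`, so dividing by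
`√(2 + 2 sin θ)`, which is nonzero because `sin θ > -1` on `(-π/2, π/2]`, turns the standard basis
into an orthonormal family.
-/

section BlockEigenvector

variable {R m ι : Type*} [CommRing R] [Fintype m] [Fintype ι] [DecidableEq ι]

theorem mulVec_dotProduct_mulVec_of_transpose_mul_self {q : Matrix m ι R} (hq : qᵀ * q = 1)
    (x y : ι → R) : q *ᵥ x ⬝ᵥ q *ᵥ y = x ⬝ᵥ y := by
  rw [dotProduct_mulVec, ← vecMul_transpose, vecMul_vecMul, hq, vecMul_one]

def bandVec (c s : R) (q : Matrix m ι R) (x : ι → R) : m ⊕ ι → R :=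
  Sum.elim (c • q *ᵥ x) (-(1 + s) • x)

theorem bandVec_dotProduct_bandVec {c s : R} {q : Matrix m ι R} (hq : qᵀ * q = 1)
    (hcs : c ^ 2 + s ^ 2 = 1) (x y : ι → R) :
    bandVec c s q x ⬝ᵥ bandVec c s q y = (2 + 2 * s) * (x ⬝ᵥ y) := by
  simp only [bandVec, sumElim_dotProduct_sumElim, smul_dotProduct, dotProduct_smul,
    mulVec_dotProduct_mulVec_of_transpose_mul_self hq, smul_eq_mul]
  linear_combination (x ⬝ᵥ y) * hcs

theorem mulVec_bandVec [DecidableEq m] {c s : R} {q : Matrix m ι R} (hq : qᵀ * q = 1)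
    (hcs : c ^ 2 + s ^ 2 = 1) (x : ι → R) :
    (c • fromBlocks 0 q qᵀ 0 + s • fromBlocks 1 0 0 (-1)) *ᵥ bandVec c s q x =
      -bandVec c s q x := by
  have hqq : qᵀ *ᵥ (q *ᵥ x) = x := by rw [mulVec_mulVec, hq, one_mulVec]
  ext (i | i) <;>
    simp only [bandVec, add_mulVec, smul_mulVec, fromBlocks_mulVec, Sum.elim_comp_inl,
      Sum.elim_comp_inr, mulVec_smul, hqq, zero_mulVec, one_mulVec, neg_mulVec, Pi.add_apply,
      Pi.smul_apply, Pi.neg_apply, Sum.elim_inl, Sum.elim_inr, smul_eq_mul, Pi.zero_apply]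
  · ring
  · linear_combination x i * hcs

end BlockEigenvector

theorem uVec_eq_smul_bandVec (θ : ℝ) (q : Matrix (Fin 4) (Fin 4) ℝ) (α : Fin 4) :
    uVec θ q α = (√(2 + 2 * sin θ))⁻¹ • bandVec (cos θ) (sin θ) q (Pi.single α 1) := by
  ext (i | i) <;> simp [uVec, bandVec, div_eq_inv_mul]

theorem stmt_19_general (θ : ℝ) (hθ : θ ∈ Set.Ioc (-(π / 2)) (π / 2))
    (q : Matrix (Fin 4) (Fin 4) ℝ) (hq : qᵀ * q = 1) :
    (∀ α β : Fin 4, uVec θ q α ⬝ᵥ uVec θ q β = if α = β then 1 else 0) ∧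
    (∀ α : Fin 4, (Ham θ q).mulVec (uVec θ q α) = -uVec θ q α) := by
  have hcs : cos θ ^ 2 + sin θ ^ 2 = 1 := by rw [add_comm, sin_sq_add_cos_sq]
  have hsin : -1 < sin θ := by
    simpa using sin_lt_sin_of_lt_of_le_pi_div_two le_rfl hθ.2 hθ.1
  have hnorm : (√(2 + 2 * sin θ))⁻¹ * (√(2 + 2 * sin θ))⁻¹ * (2 + 2 * sin θ) = 1 := by
    rw [← mul_inv, mul_self_sqrt (by linarith), inv_mul_cancel₀ (by linarith)]
  refine ⟨fun α β => ?_, fun α => ?_⟩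
  · rw [uVec_eq_smul_bandVec, uVec_eq_smul_bandVec, smul_dotProduct, dotProduct_smul,
      bandVec_dotProduct_bandVec hq hcs, single_one_dotProduct, Pi.single_apply, smul_eq_mul,
      smul_eq_mul, ← mul_assoc, ← mul_assoc, hnorm, one_mul]
  · rw [uVec_eq_smul_bandVec, mulVec_smul, Ham, mulVec_bandVec hq hcs, smul_neg]

/-- For orthogonal `q` and `θ ∈ (-π/2, π/2]`, the vectors `u_α` are orthonormal and each
is an eigenvector of `H` with eigenvalue `-1`. -/
theorem stmt_19 (θ : ℝ) (hθ : θ ∈ Set.Ioc (-(π / 2)) (π / 2))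
    (q : Matrix (Fin 4) (Fin 4) ℝ) (hq : qᵀ * q = 1) (hq' : q * qᵀ = 1) :
    (∀ α β : Fin 4, uVec θ q α ⬝ᵥ uVec θ q β = if α = β then 1 else 0) ∧
    (∀ α : Fin 4, (Ham θ q).mulVec (uVec θ q α) = -uVec θ q α) :=
  stmt_19_general θ hθ q hq
end
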